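/- arXiv:1801.05604 — 2 statements merged into one kernel-verified Lean document; each statement's English description precedes it below -/
import Mathlib

section
/- Let X, Y, Z be positive real numbers and consider the anchors Ȧ = (0,0,0), Ä = (X,0,0), A⃛ = (0,0,Z) in ℝ³. The map sending each point P = (x,y,z) with 0 ≤ x ≤ X, 0 ≤ y ≤ Y, 0 ≤ z ≤ Z to the triple of Euclidean distances (dist(P,Ȧ), dist(P,Ä), dist(P,A⃛)) is injective; i.e., two points of the box with equal distance triples to these three anchors are equal. -/
/-! Two anchors `0` and `a • eᵢ` on a coordinate axis pin down the `i`-th coordinate: the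
difference of the squared distances to them is affine in `xᵢ` with slope `-2a`. The anchors
`Ä` and `A⃛` thus fix `x` and `z`; the distance to `Ȧ` then fixes `y²`, and `y ≥ 0` fixes `y`. -/

open RealInnerProductSpace

theorem inner_eq_of_norm_eq_of_norm_sub_eq {F : Type*} [NormedAddCommGroup F]
    [InnerProductSpace ℝ F] {p q v : F} (h₀ : ‖p‖ = ‖q‖) (hv : ‖p - v‖ = ‖q - v‖) :
    ⟪p, v⟫ = ⟪q, v⟫ := by
  have hp := norm_sub_sq_real p v
  have hq := norm_sub_sq_real q v
  rw [h₀, hv] at hp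
  linarith

namespace EuclideanSpace

variable {ι : Type*} [Fintype ι] [DecidableEq ι]

theorem apply_eq_of_dist_eq_of_dist_single_eq {p q : EuclideanSpace ℝ ι} {i : ι} {a : ℝ}
    (ha : a ≠ 0) (h₀ : dist p 0 = dist q 0)
    (hi : dist p (single i a) = dist q (single i a)) : p i = q i := by
  rw [dist_zero_right, dist_zero_right] at h₀
  rw [dist_eq_norm, dist_eq_norm] at hi
  have h := inner_eq_of_norm_eq_of_norm_sub_eq h₀ hi
  simp only [inner_single_right, starRingEnd_apply, star_trivial] at h
  exact mul_left_cancel₀ ha h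

theorem eq_of_norm_eq_of_forall_ne {p q : EuclideanSpace ℝ ι} (i : ι) (hnorm : ‖p‖ = ‖q‖)
    (hne : ∀ j ≠ i, p j = q j) (hp : 0 ≤ p i) (hq : 0 ≤ q i) : p = q := by
  have hsq : ∀ x : EuclideanSpace ℝ ι,
      ‖x‖ ^ 2 = x i ^ 2 + ∑ j ∈ Finset.univ.erase i, x j ^ 2 := fun x => by
    simp only [norm_sq_eq, Real.norm_eq_abs, sq_abs]
    exact (Finset.add_sum_erase _ _ (Finset.mem_univ i)).symm
  have hrest : ∑ j ∈ Finset.univ.erase i, p j ^ 2 = ∑ j ∈ Finset.univ.erase i, q j ^ 2 :=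
    Finset.sum_congr rfl fun j hj => by rw [hne j (Finset.ne_of_mem_erase hj)]
  have hi : p i ^ 2 = q i ^ 2 := by
    have := congrArg (· ^ 2) hnorm
    simp only [hsq, hrest] at this
    linarith
  ext j
  by_cases hj : j = i
  · subst hj
    exact (pow_left_inj₀ hp hq two_ne_zero).1 hi
  · exact hne j hj

end EuclideanSpace

theorem box_injOn_dist_triple_general (X Y Z : ℝ) (hX : 0 < X) (hZ : 0 < Z) :
    Set.InjOn
      (fun P : EuclideanSpace ℝ (Fin 3) =>
        (dist P (!₂[0, 0, 0] : EuclideanSpace ℝ (Fin 3)),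
         dist P (!₂[X, 0, 0] : EuclideanSpace ℝ (Fin 3)),
         dist P (!₂[0, 0, Z] : EuclideanSpace ℝ (Fin 3))))
      {P : EuclideanSpace ℝ (Fin 3) |
        0 ≤ P 0 ∧ P 0 ≤ X ∧ 0 ≤ P 1 ∧ P 1 ≤ Y ∧ 0 ≤ P 2 ∧ P 2 ≤ Z} := by
  rintro P ⟨-, -, hP, -⟩ Q ⟨-, -, hQ, -⟩ h
  have hO : (!₂[0, 0, 0] : EuclideanSpace ℝ (Fin 3)) = 0 := by
    ext i; fin_cases i <;> simp
  have hAx : (!₂[X, 0, 0] : EuclideanSpace ℝ (Fin 3)) = EuclideanSpace.single 0 X := by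
    ext i; fin_cases i <;> simp
  have hAz : (!₂[0, 0, Z] : EuclideanSpace ℝ (Fin 3)) = EuclideanSpace.single 2 Z := by
    ext i; fin_cases i <;> simp
  simp only [hO, hAx, hAz, Prod.ext_iff] at h
  obtain ⟨h₀, hdx, hdz⟩ := h
  have hx := EuclideanSpace.apply_eq_of_dist_eq_of_dist_single_eq hX.ne' h₀ hdx
  have hz := EuclideanSpace.apply_eq_of_dist_eq_of_dist_single_eq hZ.ne' h₀ hdz
  rw [dist_zero_right, dist_zero_right] at h₀
  refine EuclideanSpace.eq_of_norm_eq_of_forall_ne 1 h₀ (fun j hj => ?_) hP hQ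
  fin_cases j
  exacts [hx, absurd rfl hj, hz]

/-- Lemma 1 (canonical viewport): a point of the box `[0,X]×[0,Y]×[0,Z]` is uniquely
determined by its Euclidean distances to the three anchors
`Ȧ = (0,0,0)`, `Ä = (X,0,0)`, `A⃛ = (0,0,Z)`. -/
theorem box_injOn_dist_triple (X Y Z : ℝ) (hX : 0 < X) (hY : 0 < Y) (hZ : 0 < Z) :
    Set.InjOn
      (fun P : EuclideanSpace ℝ (Fin 3) =>
        (dist P (!₂[0, 0, 0] : EuclideanSpace ℝ (Fin 3)),
         dist P (!₂[X, 0, 0] : EuclideanSpace ℝ (Fin 3)),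
         dist P (!₂[0, 0, Z] : EuclideanSpace ℝ (Fin 3))))
      {P : EuclideanSpace ℝ (Fin 3) |
        0 ≤ P 0 ∧ P 0 ≤ X ∧ 0 ≤ P 1 ∧ P 1 ≤ Y ∧ 0 ≤ P 2 ∧ P 2 ≤ Z} :=
  box_injOn_dist_triple_general X Y Z hX hZ
end

section
/- Let X, Y, Z > 0 and let v₁, v₂, v₃ be any three distinct vertices of the box [0,X]×[0,Y]×[0,Z] that all lie on a common face of the box (i.e., the three vertices agree in one coordinate, that coordinate being an extreme value 0 or the corresponding side length). Then the map sending each point P of the box to the triple of Euclidean distances (dist(P,v₁), dist(P,v₂), dist(P,v₃)) is injective on the box. -/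
/-!
If `P` and `Q` are equidistant from two points `u ≠ w`, then `Q - P` is orthogonal to `w - u`.
Three distinct vertices on a face `x i = c` of the box contain, for each of the two in-face
directions `j`, a pair differing only in coordinate `j` (pigeonhole on the third coordinate), so
`P` and `Q` agree off coordinate `i`. Along the normal direction, `P i` and `Q i` lie in `[0, L]`
and have the same distance to the endpoint `v₁ i ∈ {0, L}`, hence coincide.
-/

open Set

theorem eq_of_dist_endpoint_eq {a b s p q : ℝ} (hs : s = a ∨ s = b) (hp : p ∈ Icc a b)
    (hq : q ∈ Icc a b) (h : dist p s = dist q s) : p = q := by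
  rw [Real.dist_eq, Real.dist_eq] at h
  obtain ⟨hap, hpb⟩ := hp
  obtain ⟨haq, hqb⟩ := hq
  rcases hs with rfl | rfl
  · rwa [abs_of_nonneg (by linarith), abs_of_nonneg (by linarith), sub_left_inj] at h
  · rwa [abs_of_nonpos (by linarith), abs_of_nonpos (by linarith), neg_inj, sub_left_inj] at h

namespace EuclideanSpace

variable {ι : Type*} [Fintype ι]

theorem apply_eq_of_dist_eq_of_differ_only_at {u w P Q : EuclideanSpace ℝ ι} {j : ι}
    (huw : u ≠ w) (hoff : ∀ k ≠ j, u k = w k) (hu : dist P u = dist Q u)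
    (hw : dist P w = dist Q w) : P j = Q j := by
  have huwj : w j - u j ≠ 0 := fun h => huw <| PiLp.ext fun k => by
    by_cases hk : k = j
    · subst hk; linarith
    · exact hoff k hk
  have horth := EuclideanGeometry.inner_vsub_vsub_of_dist_eq_of_dist_eq hu hw
  rw [vsub_eq_sub, vsub_eq_sub, PiLp.inner_apply, Finset.sum_eq_single j] at horth
  · simp only [PiLp.sub_apply, RCLike.inner_apply, conj_trivial, mul_eq_zero] at horth
    exact horth.elim (fun h => by linarith) (absurd · huwj)
  · intro k _ hk
    simp [hoff k hk]
  · simp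

theorem eq_of_dist_eq_of_agree_off [DecidableEq ι] {P Q v : EuclideanSpace ℝ ι} {i : ι}
    {a b : ℝ} (hoff : ∀ k ≠ i, P k = Q k) (hv : v i = a ∨ v i = b) (hP : P i ∈ Icc a b)
    (hQ : Q i ∈ Icc a b) (h : dist P v = dist Q v) : P = Q := by
  refine PiLp.ext fun k => (em (k = i)).elim (fun hk => hk ▸ ?_) (hoff k)
  refine eq_of_dist_endpoint_eq hv hP hQ ?_
  have hsq : dist P v ^ 2 = dist Q v ^ 2 := by rw [h]
  rw [dist_sq_eq, dist_sq_eq, ← Finset.add_sum_erase _ _ (Finset.mem_univ i),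
    ← Finset.add_sum_erase _ _ (Finset.mem_univ i),
    Finset.sum_congr rfl fun k hk => by rw [hoff k (Finset.ne_of_mem_erase hk)],
    add_left_inj] at hsq
  exact (sq_eq_sq₀ dist_nonneg dist_nonneg).1 hsq

theorem exists_ne_differ_only_at_of_face {S : Finset (EuclideanSpace ℝ (Fin 3))}
    (hS : 2 < S.card) {a b : Fin 3 → ℝ} (hvert : ∀ v ∈ S, ∀ k, v k = a k ∨ v k = b k)
    {i : Fin 3} {c : ℝ} (hface : ∀ v ∈ S, v i = c) {j : Fin 3} (hji : j ≠ i) :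
    ∃ u ∈ S, ∃ w ∈ S, u ≠ w ∧ ∀ m ≠ j, u m = w m := by
  have hthird : ∀ i j : Fin 3, j ≠ i → ∃ k, k ≠ i ∧ k ≠ j ∧ ∀ m, m = i ∨ m = j ∨ m = k := by
    decide
  obtain ⟨k, hki, hkj, hcover⟩ := hthird i j hji
  obtain ⟨u, hu, w, hw, huw, hk⟩ :=
    Finset.exists_ne_map_eq_of_card_lt_of_maps_to (t := {a k, b k})
      (Finset.card_le_two.trans_lt hS) (fun v hv => by simpa using hvert v hv k)
  refine ⟨u, hu, w, hw, huw, fun m hm => ?_⟩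
  rcases hcover m with rfl | rfl | rfl
  · rw [hface u hu, hface w hw]
  · exact absurd rfl hm
  · exact hk

end EuclideanSpace

open EuclideanSpace in
theorem box_injOn_dist_triple_of_viewport_general (X Y Z : ℝ)
    (v₁ v₂ v₃ : EuclideanSpace ℝ (Fin 3))
    (hvert : ∀ v ∈ ({v₁, v₂, v₃} : Set (EuclideanSpace ℝ (Fin 3))),
      (v 0 = 0 ∨ v 0 = X) ∧ (v 1 = 0 ∨ v 1 = Y) ∧ (v 2 = 0 ∨ v 2 = Z))
    (hne : v₁ ≠ v₂ ∧ v₁ ≠ v₃ ∧ v₂ ≠ v₃)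
    (hface : ∃ i : Fin 3, v₁ i = v₂ i ∧ v₂ i = v₃ i) :
    Set.InjOn (fun P : EuclideanSpace ℝ (Fin 3) => (dist P v₁, dist P v₂, dist P v₃))
      {P : EuclideanSpace ℝ (Fin 3) |
        0 ≤ P 0 ∧ P 0 ≤ X ∧ 0 ≤ P 1 ∧ P 1 ≤ Y ∧ 0 ≤ P 2 ∧ P 2 ≤ Z} := by
  classical
  intro P hP Q hQ h
  obtain ⟨hd₁, hd₂, hd₃⟩ : _ ∧ _ ∧ _ := by simpa only [Prod.mk.injEq] using h
  obtain ⟨i, h₁₂, h₂₃⟩ := hface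
  set S : Finset (EuclideanSpace ℝ (Fin 3)) := {v₁, v₂, v₃}
  have hS : ∀ v ∈ S, v = v₁ ∨ v = v₂ ∨ v = v₃ := by simp [S]
  have hvertS : ∀ v ∈ S, ∀ k, v k = 0 ∨ v k = ![X, Y, Z] k := by
    intro v hv k
    obtain ⟨h0, h1, h2⟩ := hvert v (by rcases hS v hv with rfl | rfl | rfl <;> simp)
    fin_cases k <;> assumption
  have hbox : ∀ R ∈ {P : EuclideanSpace ℝ (Fin 3) |
      0 ≤ P 0 ∧ P 0 ≤ X ∧ 0 ≤ P 1 ∧ P 1 ≤ Y ∧ 0 ≤ P 2 ∧ P 2 ≤ Z}, R i ∈ Icc 0 (![X, Y, Z] i) := by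
    rintro R ⟨_, _, _, _, _, _⟩
    fin_cases i <;> exact ⟨‹_›, ‹_›⟩
  have hoff : ∀ j ≠ i, P j = Q j := by
    intro j hji
    obtain ⟨u, hu, w, hw, huw, huw_off⟩ := exists_ne_differ_only_at_of_face
      (by rw [Finset.card_eq_three.2 ⟨v₁, v₂, v₃, hne.1, hne.2.1, hne.2.2, rfl⟩]; norm_num)
      hvertS (c := v₁ i) (by intro v hv; rcases hS v hv with rfl | rfl | rfl <;> simp [h₁₂, h₂₃])
      hji
    have hdist : ∀ v ∈ S, dist P v = dist Q v := by
      intro v hv; rcases hS v hv with rfl | rfl | rfl <;> assumption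
    exact apply_eq_of_dist_eq_of_differ_only_at huw huw_off (hdist u hu) (hdist w hw)
  exact eq_of_dist_eq_of_agree_off hoff (hvertS v₁ (by simp [S]) i) (hbox P hP) (hbox Q hQ) hd₁

/-- General form of Lemma 1: any three distinct vertices of the box
`[0,X]×[0,Y]×[0,Z]` lying on a common face of the box (i.e. agreeing in one
coordinate, which for vertices is necessarily an extreme value) form a viewport:
the map sending each point of the box to its triple of Euclidean distances to the
three vertices is injective on the box. -/
theorem box_injOn_dist_triple_of_viewport (X Y Z : ℝ)
    (hX : 0 < X) (hY : 0 < Y) (hZ : 0 < Z)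
    (v₁ v₂ v₃ : EuclideanSpace ℝ (Fin 3))
    (hvert : ∀ v ∈ ({v₁, v₂, v₃} : Set (EuclideanSpace ℝ (Fin 3))),
      (v 0 = 0 ∨ v 0 = X) ∧ (v 1 = 0 ∨ v 1 = Y) ∧ (v 2 = 0 ∨ v 2 = Z))
    (hne : v₁ ≠ v₂ ∧ v₁ ≠ v₃ ∧ v₂ ≠ v₃)
    (hface : ∃ i : Fin 3, v₁ i = v₂ i ∧ v₂ i = v₃ i) :
    Set.InjOn (fun P : EuclideanSpace ℝ (Fin 3) => (dist P v₁, dist P v₂, dist P v₃))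
      {P : EuclideanSpace ℝ (Fin 3) |
        0 ≤ P 0 ∧ P 0 ≤ X ∧ 0 ≤ P 1 ∧ P 1 ≤ Y ∧ 0 ≤ P 2 ∧ P 2 ≤ Z} :=
  box_injOn_dist_triple_of_viewport_general X Y Z v₁ v₂ v₃ hvert hne hface
end
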